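/- arXiv:1210.4951 — 6 statements merged into one kernel-verified Lean document; each statement's English description precedes it below -/
import Mathlib

section
/- Let K be a (commutative) field and n a positive integer. If V is a K-linear subspace of M_n(K) all of whose elements are nilpotent matrices, then dim_K V ≤ (n choose 2). -/
/-!
Induction on `n`. Write `M ∈ V ⊆ M_{n+1}(K)` in block form `[a r; c D]` with respect to the first
basis vector. The matrices of `V` with `c = 0` have characteristic polynomial `(X - a) χ_D`, so
`a = 0` and `D` is nilpotent: their blocks `D` form a nilpotent subspace of `M_n(K)`, of dimension
at most `n choose 2`. Those with moreover `D = 0` are rank-one matrices `e₀ (0, r)ᵀ`, determined by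
their row tail `r`. Hence `dim V ≤ dim C + (n choose 2) + dim R`, where `C` and `R` are the spaces of
column tails of `V` and of row tails of these rank-one matrices.

The two spaces are orthogonal for the dot product, so `dim C + dim R ≤ n`: if `M` and `M + u vᵀ`
are nilpotent then `vᵀ M u = 0`. Indeed over `K[X]` the geometric series `S = ∑ Xʲ Mʲ` inverts
`1 - X M`, so `det (1 - X (M + u vᵀ)) = det (1 - X M) · (1 - X vᵀ S u)`; the reversed
characteristic polynomials of nilpotent matrices are `1`, hence `vᵀ S u = ∑ vᵀ Mʲ u Xʲ = 0`.
-/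

open Polynomial Matrix Module

namespace Matrix

section CharpolyRev

variable {R : Type*} [CommRing R] {m : Type*} [Fintype m] [DecidableEq m]

theorem det_one_sub_vecMulVec (u v : m → R) : det (1 - vecMulVec u v) = 1 - v ⬝ᵥ u := by
  have h := det_one_add_replicateCol_mul_replicateRow (ι := Unit) (-u) v
  rwa [← vecMulVec_eq, neg_vecMulVec, ← sub_eq_add_neg, dotProduct_neg, ← sub_eq_add_neg] at h

theorem charpolyRev_eq_one_of_isNilpotent [IsReduced R] {M : Matrix m m R} (hM : IsNilpotent M) :
    M.charpolyRev = 1 := by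
  have hunit := isUnit_iff_coeff_isUnit_isNilpotent.mp (isUnit_charpolyRev_of_isNilpotent hM)
  ext i
  rcases eq_or_ne i 0 with rfl | hi
  · simp [coeff_zero_eq_eval_zero]
  · simpa [coeff_one, hi] using (hunit.2 i hi).eq_zero

theorem dotProduct_pow_mulVec_eq_zero_of_isNilpotent_add_vecMulVec [IsReduced R]
    {M : Matrix m m R} {u v : m → R} (hM : IsNilpotent M)
    (huv : IsNilpotent (M + vecMulVec u v)) (j : ℕ) : v ⬝ᵥ (M ^ j *ᵥ u) = 0 := by
  obtain ⟨k, hk⟩ := hM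
  let P : Matrix m m R[X] := (X : R[X]) • M.map C
  let S := ∑ i ∈ Finset.range (k + j + 1), P ^ i
  have hPS : (1 - P) * S = 1 := by
    rw [mul_neg_geom_sum, _root_.smul_pow, ← Matrix.map_pow, add_assoc, pow_add M, hk]
    simp
  have hterm (i : ℕ) : (C ∘ v) ⬝ᵥ (P ^ i *ᵥ (C ∘ u)) = C (v ⬝ᵥ (M ^ i *ᵥ u)) * X ^ i := by
    rw [_root_.smul_pow, smul_mulVec, dotProduct_smul, smul_eq_mul, ← Matrix.map_pow, mul_comm,
      RingHom.map_dotProduct]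
    congr 2
    funext a
    exact (RingHom.map_mulVec C _ _ a).symm
  have hfactor : 1 - (X : R[X]) • (M + vecMulVec u v).map C
      = (1 - P) * (1 - vecMulVec (S *ᵥ ((X : R[X]) • (C ∘ u))) (C ∘ v)) := by
    rw [Matrix.mul_sub, Matrix.mul_one, mul_vecMulVec, mulVec_mulVec, hPS, one_mulVec]
    ext a b
    simp [P, sub_sub, mul_add, vecMulVec_apply]
  have hX : (C ∘ v) ⬝ᵥ (S *ᵥ (C ∘ u)) * X = 0 := by
    have h := charpolyRev_eq_one_of_isNilpotent huv
    rw [charpolyRev, hfactor, det_mul, ← charpolyRev, charpolyRev_eq_one_of_isNilpotent ⟨k, hk⟩,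
      det_one_sub_vecMulVec, one_mul, sub_eq_self, mulVec_smul, dotProduct_smul, smul_eq_mul] at h
    rwa [mul_comm]
  have hcoeff := congrArg (coeff · (j + 1)) hX
  simp only [coeff_mul_X, coeff_zero, S, sum_mulVec, dotProduct_sum, hterm, finsetSum_coeff,
    coeff_C_mul_X_pow] at hcoeff
  simpa using hcoeff

theorem isNilpotent_iff_charpoly [IsDomain R] (M : Matrix m m R) :
    IsNilpotent M ↔ M.charpoly = X ^ Fintype.card m :=
  ⟨fun h => sub_eq_zero.mp (isNilpotent_charpoly_sub_pow_of_isNilpotent h).eq_zero,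
    fun h => ⟨Fintype.card m, by simpa [h] using aeval_self_charpoly M⟩⟩

end CharpolyRev

section FirstColumn

variable {R : Type*} [CommRing R] {n : ℕ}

theorem charmatrix_submatrix {m l : Type*} [Fintype m] [DecidableEq m] [Fintype l]
    [DecidableEq l] (M : Matrix m m R) {e : l → m} (he : Function.Injective e) :
    (charmatrix M).submatrix e e = charmatrix (M.submatrix e e) := by
  ext i j
  rcases eq_or_ne i j with rfl | h
  · simp [charmatrix_apply_eq]
  · simp [charmatrix_apply_ne _ _ _ h, charmatrix_apply_ne _ _ _ (he.ne h)]

theorem charpoly_eq_X_sub_C_mul_charpoly_submatrix_succ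
    {M : Matrix (Fin (n + 1)) (Fin (n + 1)) R} (hcol : ∀ i : Fin n, M i.succ 0 = 0) :
    M.charpoly = (X - C (M 0 0)) * (M.submatrix Fin.succ Fin.succ).charpoly := by
  rw [charpoly, det_succ_column_zero, Fin.sum_univ_succ, Fin.succAbove_zero,
    charmatrix_submatrix _ (Fin.succ_injective n), charmatrix_apply_eq, charpoly]
  simp [hcol]

theorem apply_zero_zero_eq_zero_and_isNilpotent_submatrix_succ [IsDomain R]
    {M : Matrix (Fin (n + 1)) (Fin (n + 1)) R} (hM : IsNilpotent M)
    (hcol : ∀ i : Fin n, M i.succ 0 = 0) :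
    M 0 0 = 0 ∧ IsNilpotent (M.submatrix Fin.succ Fin.succ) := by
  have h := (isNilpotent_iff_charpoly M).mp hM
  rw [charpoly_eq_X_sub_C_mul_charpoly_submatrix_succ hcol, Fintype.card_fin] at h
  have h00 : M 0 0 = 0 := by
    simpa using (congrArg (eval (M 0 0)) h).symm
  refine ⟨h00, (isNilpotent_iff_charpoly _).mpr ?_⟩
  rw [h00, C_0, sub_zero, pow_succ'] at h
  rw [Fintype.card_fin]
  exact mul_left_cancel₀ X_ne_zero h

end FirstColumn

section Blocks

variable {R : Type*} {n : ℕ}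

section Semiring

variable [Semiring R]

def firstColTail : Matrix (Fin (n + 1)) (Fin (n + 1)) R →ₗ[R] Fin n → R where
  toFun M i := M i.succ 0
  map_add' _ _ := rfl
  map_smul' _ _ := rfl

def firstRowTail : Matrix (Fin (n + 1)) (Fin (n + 1)) R →ₗ[R] Fin n → R where
  toFun M j := M 0 j.succ
  map_add' _ _ := rfl
  map_smul' _ _ := rfl

def submatrixSucc : Matrix (Fin (n + 1)) (Fin (n + 1)) R →ₗ[R] Matrix (Fin n) (Fin n) R where
  toFun M := M.submatrix Fin.succ Fin.succ
  map_add' _ _ := rfl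
  map_smul' _ _ := rfl

@[simp] theorem firstColTail_apply (M : Matrix (Fin (n + 1)) (Fin (n + 1)) R) (i : Fin n) :
    firstColTail M i = M i.succ 0 := rfl

@[simp] theorem firstRowTail_apply (M : Matrix (Fin (n + 1)) (Fin (n + 1)) R) (j : Fin n) :
    firstRowTail M j = M 0 j.succ := rfl

@[simp] theorem submatrixSucc_apply (M : Matrix (Fin (n + 1)) (Fin (n + 1)) R) (i j : Fin n) :
    submatrixSucc M i j = M i.succ j.succ := rfl

end Semiring

variable [CommRing R] [IsDomain R]

theorem eq_vecMulVec_firstRowTail {N : Matrix (Fin (n + 1)) (Fin (n + 1)) R}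
    (hN : IsNilpotent N) (hcol : firstColTail N = 0) (hblock : submatrixSucc N = 0) :
    N = vecMulVec (Pi.single 0 1) (vecCons 0 (firstRowTail N)) := by
  have h00 := (apply_zero_zero_eq_zero_and_isNilpotent_submatrix_succ hN (congrFun hcol)).1
  ext i j
  refine Fin.cases ?_ (fun i => ?_) i <;> refine Fin.cases ?_ (fun j => ?_) j
  · simp [h00]
  · simp
  · simpa using congrFun hcol i
  · simpa using congrFun (congrFun hblock i) j

theorem firstColTail_dotProduct_firstRowTail_eq_zero
    {M N : Matrix (Fin (n + 1)) (Fin (n + 1)) R} (hM : IsNilpotent M) (hN : IsNilpotent N)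
    (hMN : IsNilpotent (M + N)) (hcol : firstColTail N = 0) (hblock : submatrixSucc N = 0) :
    firstColTail M ⬝ᵥ firstRowTail N = 0 := by
  rw [eq_vecMulVec_firstRowTail hN hcol hblock] at hMN
  have h := dotProduct_pow_mulVec_eq_zero_of_isNilpotent_add_vecMulVec hM hMN 1
  simp only [pow_one, mulVec_single_one, cons_dotProduct, zero_mul, zero_add] at h
  rwa [dotProduct_comm] at h

end Blocks

end Matrix

section Finrank

variable {K : Type*} [Field K]

theorem Submodule.finrank_map_add_finrank_inf_ker {E F : Type*} [AddCommGroup E] [Module K E]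
    [FiniteDimensional K E] [AddCommGroup F] [Module K F] (f : E →ₗ[K] F) (V : Submodule K E) :
    finrank K (V.map f) + finrank K (V ⊓ LinearMap.ker f : Submodule K E) = finrank K V := by
  have h := LinearMap.finrank_range_add_finrank_ker (f.domRestrict V)
  rwa [LinearMap.range_domRestrict, LinearMap.ker_domRestrict,
    ← Submodule.finrank_map_subtype_eq, Submodule.map_comap_subtype] at h

theorem dotProductBilin_nondegenerate {R m : Type*} [CommRing R] [Fintype m] [DecidableEq m] :
    (dotProductBilin R R : LinearMap.BilinForm R (m → R)).Nondegenerate := by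
  refine ⟨fun x hx => ?_, fun x hx => ?_⟩ <;> funext i <;> simpa using hx (Pi.single i 1)

theorem finrank_add_finrank_le_card_of_dotProduct_eq_zero {m : Type*} [Fintype m]
    [DecidableEq m] {B C : Submodule K (m → K)} (h : ∀ b ∈ B, ∀ c ∈ C, c ⬝ᵥ b = 0) :
    finrank K B + finrank K C ≤ Fintype.card m := by
  have hB : B ≤ LinearMap.BilinForm.orthogonal (dotProductBilin K K) C :=
    fun b hb c hc => h b hb c hc
  have hBC := Submodule.finrank_mono hB
  have hC := C.finrank_le
  rw [LinearMap.BilinForm.finrank_orthogonal dotProductBilin_nondegenerate,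
    finrank_fintype_fun_eq_card] at hBC
  rw [finrank_fintype_fun_eq_card] at hC
  omega

end Finrank

section Gerstenhaber

variable {K : Type*} [Field K] {n : ℕ} {V : Submodule K (Matrix (Fin (n + 1)) (Fin (n + 1)) K)}

theorem isNilpotent_of_mem_map_submatrixSucc (hV : ∀ M ∈ V, IsNilpotent M) :
    ∀ D ∈ (V ⊓ LinearMap.ker firstColTail).map submatrixSucc, IsNilpotent D := by
  rintro _ ⟨M, ⟨hMV, hMcol⟩, rfl⟩
  exact (apply_zero_zero_eq_zero_and_isNilpotent_submatrix_succ (hV M hMV) (congrFun hMcol)).2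

theorem finrank_le_finrank_map_submatrixSucc_add (hV : ∀ M ∈ V, IsNilpotent M) :
    finrank K V ≤ finrank K ((V ⊓ LinearMap.ker firstColTail).map submatrixSucc) + n := by
  set V₁ := V ⊓ LinearMap.ker firstColTail
  set V₂ := V₁ ⊓ LinearMap.ker submatrixSucc
  have hrow : V₂ ⊓ LinearMap.ker firstRowTail = ⊥ := by
    refine (Submodule.eq_bot_iff _).mpr fun N ⟨hN, hrow⟩ => ?_
    rw [eq_vecMulVec_firstRowTail (hV N hN.1.1) hN.1.2 hN.2, LinearMap.mem_ker.mp hrow,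
      cons_zero_zero, vecMulVec_zero]
  have horth : ∀ r ∈ V₂.map firstRowTail, ∀ c ∈ V.map firstColTail, c ⬝ᵥ r = 0 := by
    rintro _ ⟨N, hN, rfl⟩ _ ⟨M, hM, rfl⟩
    exact firstColTail_dotProduct_firstRowTail_eq_zero (hV M hM) (hV N hN.1.1)
      (hV _ (add_mem hM hN.1.1)) hN.1.2 hN.2
  have hV₁ : finrank K (V.map firstColTail) + finrank K V₁ = finrank K V :=
    V.finrank_map_add_finrank_inf_ker _
  have hV₂ : finrank K (V₁.map submatrixSucc) + finrank K V₂ = finrank K V₁ :=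
    V₁.finrank_map_add_finrank_inf_ker _
  have hrank := V₂.finrank_map_add_finrank_inf_ker firstRowTail
  rw [hrow, finrank_bot] at hrank
  have hdim := finrank_add_finrank_le_card_of_dotProduct_eq_zero horth
  rw [Fintype.card_fin] at hdim
  omega

end Gerstenhaber

theorem stmt_2_general (K : Type*) [Field K] (n : ℕ)
    (V : Submodule K (Matrix (Fin n) (Fin n) K))
    (hV : ∀ M ∈ V, IsNilpotent M) :
    Module.finrank K V ≤ n.choose 2 := by
  induction n with
  | zero => exact V.finrank_le.trans (by simp [finrank_matrix])
  | succ n ih =>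
    calc finrank K V
        ≤ finrank K ((V ⊓ LinearMap.ker firstColTail).map submatrixSucc) + n :=
          finrank_le_finrank_map_submatrixSucc_add hV
      _ ≤ n.choose 2 + n := by gcongr; exact ih _ (isNilpotent_of_mem_map_submatrixSucc hV)
      _ = (n + 1).choose 2 := by rw [Nat.choose_succ_succ', Nat.choose_one_right, add_comm]

/-- Gerstenhaber inequality: a linear subspace of nilpotent `n × n` matrices over a
commutative field `K` has dimension at most `n choose 2`. -/
theorem stmt_2 (K : Type*) [Field K] (n : ℕ) (hn : 0 < n)
    (V : Submodule K (Matrix (Fin n) (Fin n) K))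
    (hV : ∀ M ∈ V, IsNilpotent M) :
    Module.finrank K V ≤ n.choose 2 :=
  stmt_2_general K n V hV
end

section
/- Let K be a division ring and n a positive integer. Let V be a subset of M_n(K) that is closed under addition and consists only of nilpotent matrices. Then there exists an index i ∈ {1,…,n} such that the only matrix M ∈ V all of whose rows other than the i-th row are zero is M = 0. (Equivalently: some canonical basis vector e_i of the right K-vector space K^n is V-adapted, meaning no matrix of V has e_i·K as its column space.) -/
/-!
If no `e i` were adapted, pick for every `i` a nonzero `N i ∈ V` supported on row `i`, and
draw an edge `i → k` when `N i i k ≠ 0`. Every vertex has an out-edge, so an inclusion-minimal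
nonempty set `S` of vertices each having a successor in `S` is an induced cycle: each vertex
of `S` has exactly one successor in `S`. The sum of the `N i` over `S` lies in `V`, vanishes
off the rows of `S`, and has exactly one nonzero entry in each row of `S` within the columns
of `S`. Since `K` has no zero divisors, every power of it keeps a nonzero entry in each row
of `S`, so it is not nilpotent.
-/

theorem exists_finset_forall_existsUnique_rel {ι : Type*} [Fintype ι] [Nonempty ι]
    (R : ι → ι → Prop) (h : ∀ i, ∃ j, R i j) :
    ∃ S : Finset ι, S.Nonempty ∧ ∀ i ∈ S, ∃! j, j ∈ S ∧ R i j := by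
  classical
  obtain ⟨S, hS⟩ := exists_minimal_of_wellFoundedLT
    (fun s : Finset ι => s.Nonempty ∧ ∀ i ∈ s, ∃ j ∈ s, R i j)
    ⟨Finset.univ, Finset.univ_nonempty, fun i _ => (h i).imp fun j hj => ⟨Finset.mem_univ j, hj⟩⟩
  choose! F hFS hF using hS.prop.2
  have hFS_image : S.image F = S := by
    refine hS.eq_of_le ⟨hS.prop.1.image F, ?_⟩ (Finset.image_subset_iff.2 hFS)
    simp only [Finset.mem_image, forall_exists_index, and_imp, forall_apply_eq_imp_iff₂]
    exact fun x hx => ⟨F (F x), ⟨F x, hFS x hx, rfl⟩, hF _ (hFS x hx)⟩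
  have hFinj : Set.InjOn F S := Finset.injOn_of_card_image_eq (by rw [hFS_image])
  refine ⟨S, hS.prop.1, fun i hi => ⟨F i, ⟨hFS i hi, hF i hi⟩, fun j ⟨hjS, hij⟩ => ?_⟩⟩
  by_contra hjF
  by_cases hFi : F i = i
  · -- a loop at `i`: then `{i}` is admissible, so minimality gives `S = {i}`
    have hSi : {i} = S := hS.eq_of_le ⟨Finset.singleton_nonempty i, by simp [hFi ▸ hF i hi]⟩
      (Finset.singleton_subset_iff.2 hi)
    exact hjF (by rw [hFi, ← Finset.mem_singleton, hSi]; exact hjS)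
  · -- `F` is injective on `S`, so only `i` needs `F i`, and `i` can use `j` instead
    have hT := hS.eq_of_le (y := S.erase (F i)) ⟨⟨i, Finset.mem_erase.2 ⟨Ne.symm hFi, hi⟩⟩, ?_⟩
      (Finset.erase_subset _ _)
    · exact Finset.notMem_erase (F i) S (by rw [hT]; exact hFS i hi)
    intro x hx
    obtain ⟨-, hxS⟩ := Finset.mem_erase.1 hx
    by_cases hxi : x = i
    · exact ⟨j, Finset.mem_erase.2 ⟨hjF, hjS⟩, hxi ▸ hij⟩
    · exact ⟨F x, Finset.mem_erase.2 ⟨fun h => hxi (hFinj hxS hi h), hFS x hxS⟩, hF x hxS⟩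

theorem Matrix.not_isNilpotent_of_forall_existsUnique_ne_zero {ι R : Type*} [Fintype ι]
    [DecidableEq ι] [Semiring R] [NoZeroDivisors R] [Nontrivial R] (M : Matrix ι ι R)
    {S : Finset ι} (hS : S.Nonempty) (hout : ∀ i ∉ S, ∀ k, M i k = 0)
    (hunique : ∀ i ∈ S, ∃! j, j ∈ S ∧ M i j ≠ 0) : ¬IsNilpotent M := by
  have hpow_out : ∀ m, ∀ i ∉ S, ∀ j ∈ S, (M ^ m) i j = 0 := by
    intro m i hi j hj
    cases m with
    | zero => exact Matrix.one_apply_ne (ne_of_mem_of_not_mem hj hi).symm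
    | succ m =>
      rw [pow_succ', Matrix.mul_apply]
      exact Finset.sum_eq_zero fun b _ => by rw [hout i hi b, zero_mul]
  have hpow : ∀ m, ∀ i ∈ S, ∃ j ∈ S, (M ^ m) i j ≠ 0 := by
    intro m
    induction m with
    | zero => exact fun i hi => ⟨i, hi, by simp⟩
    | succ m ih =>
      intro i hi
      obtain ⟨f, ⟨hfS, hf⟩, hf_unique⟩ := hunique i hi
      obtain ⟨j, hjS, hj⟩ := ih f hfS
      refine ⟨j, hjS, ?_⟩
      rw [pow_succ', Matrix.mul_apply, Finset.sum_eq_single f]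
      · exact mul_ne_zero hf hj
      · intro b _ hbf
        by_cases hbS : b ∈ S
        · rw [not_ne_iff.1 fun hb => hbf (hf_unique b ⟨hbS, hb⟩), zero_mul]
        · rw [hpow_out m b hbS j hjS, mul_zero]
      · exact fun h => absurd (Finset.mem_univ f) h
  rintro ⟨k, hk⟩
  obtain ⟨i, hi⟩ := hS
  obtain ⟨j, -, hj⟩ := hpow k i hi
  exact hj (by rw [hk, Matrix.zero_apply])

/-- Key lemma: if `V ⊆ M_n(K)` is closed under addition and consists of nilpotent
matrices, then some index `i` is such that the only matrix of `V` whose rows other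
than the `i`-th vanish is the zero matrix (i.e. `e_i` is `V`-adapted). -/
theorem stmt_8 (K : Type*) [DivisionRing K] (n : ℕ) (hn : 0 < n)
    (V : Set (Matrix (Fin n) (Fin n) K))
    (hadd : ∀ A ∈ V, ∀ B ∈ V, A + B ∈ V)
    (hnil : ∀ M ∈ V, IsNilpotent M) :
    ∃ i : Fin n, ∀ M ∈ V, (∀ j : Fin n, j ≠ i → ∀ k : Fin n, M j k = 0) → M = 0 := by
  by_contra! hcon
  choose N hNV hNrow hNne using hcon
  have hN_row_ne : ∀ i, ∃ k, N i i k ≠ 0 := by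
    intro i
    by_contra! h
    exact hNne i (Matrix.ext fun j k => if hj : j = i then hj ▸ h k else hNrow i j hj k)
  have : Nonempty (Fin n) := ⟨⟨0, hn⟩⟩
  obtain ⟨S, hS, hunique⟩ :=
    exists_finset_forall_existsUnique_rel (fun i k => N i i k ≠ 0) hN_row_ne
  have hsum_apply : ∀ r k, (∑ i ∈ S, N i) r k = if r ∈ S then N r r k else 0 := by
    intro r k
    rw [Matrix.sum_apply]
    split_ifs with hr
    · exact Finset.sum_eq_single_of_mem r hr fun b _ hbr => hNrow b r (Ne.symm hbr) k
    · exact Finset.sum_eq_zero fun b hb => hNrow b r (fun h => hr (h ▸ hb)) k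
  have hsum_mem : ∑ i ∈ S, N i ∈ V :=
    Finset.sum_induction_nonempty _ (· ∈ V) (fun A B hA hB => hadd A hA B hB) hS fun i _ => hNV i
  refine Matrix.not_isNilpotent_of_forall_existsUnique_ne_zero _ hS (fun i hi k => ?_)
    (fun i hi => ?_) (hnil _ hsum_mem)
  · rw [hsum_apply, if_neg hi]
  · simpa only [hsum_apply, if_pos hi] using hunique i hi
end

section
/- Let K be a division ring and let A, B be nonzero nilpotent matrices in M_2(K) such that A + B is nilpotent. Then A and B have the same kernel: for every vector x ∈ K^2 (where matrices act by (M·x)_i = Σ_j M_{ij} x_j), one has A·x = 0 if and only if B·x = 0. -/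
/-!
Nilpotent endomorphisms of a 2-dimensional space square to zero, so `A² = B² = (A + B)² = 0`
and hence `AB = -BA`. Then `B` maps the line `ker A` into itself, and a nilpotent endomorphism
of a line vanishes; so `ker A ≤ ker B`, and symmetrically. Over a division ring `K`, matrices
act linearly on column vectors for the right action of `K`, i.e. as `Kᵐᵒᵖ`-linear maps.
-/

open Module LinearMap

theorem mul_add_mul_eq_zero_of_sq_eq_zero {R : Type*} [Ring R] {a b : R} (ha : a ^ 2 = 0)
    (hb : b ^ 2 = 0) (hab : (a + b) ^ 2 = 0) : a * b + b * a = 0 :=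
  calc a * b + b * a = (a + b) ^ 2 - a ^ 2 - b ^ 2 := by noncomm_ring
    _ = 0 := by rw [ha, hb, hab, sub_zero, sub_zero]

namespace Module.End

variable {D V : Type*} [DivisionRing D] [AddCommGroup V] [Module D V] [FiniteDimensional D V]

theorem pow_eq_zero_of_finrank_le {f : End D V} (hf : IsNilpotent f) {n : ℕ}
    (hn : finrank D V ≤ n) : f ^ n = 0 := by
  obtain ⟨m, hm⟩ := hf
  refine pow_eq_zero_of_le hn (ker_eq_top.mp (top_unique ?_))
  simpa [hm] using ker_pow_le_ker_pow_finrank f m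

theorem ker_le_ker_of_mul_add_mul_eq_zero {f g : End D V} (hV : finrank D V = 2) (hf : f ≠ 0)
    (hg : IsNilpotent g) (hfg : f * g + g * f = 0) : ker f ≤ ker g := by
  have hmaps : Set.MapsTo g (ker f) (ker f) := fun x hx => by
    rw [SetLike.mem_coe, mem_ker] at hx ⊢
    simpa [hx] using congr($hfg x)
  have hline : finrank D (ker f) ≤ 1 := by
    have := Submodule.finrank_lt (mt ker_eq_top.mp hf)
    omega
  have hrestrict : g.restrict hmaps = 0 := by
    simpa using pow_eq_zero_of_finrank_le (isNilpotent.restrict hmaps hg) hline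
  intro x hx
  exact congr(($hrestrict ⟨x, hx⟩ : V))

theorem ker_eq_ker_of_isNilpotent_add {f g : End D V} (hV : finrank D V = 2) (hf0 : f ≠ 0)
    (hg0 : g ≠ 0) (hf : IsNilpotent f) (hg : IsNilpotent g) (hfg : IsNilpotent (f + g)) :
    ker f = ker g := by
  have hanti := mul_add_mul_eq_zero_of_sq_eq_zero (pow_eq_zero_of_finrank_le hf hV.le)
    (pow_eq_zero_of_finrank_le hg hV.le) (pow_eq_zero_of_finrank_le hfg hV.le)
  exact le_antisymm (ker_le_ker_of_mul_add_mul_eq_zero hV hf0 hg hanti)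
    (ker_le_ker_of_mul_add_mul_eq_zero hV hg0 hf (by rwa [add_comm]))

end Module.End

namespace Matrix

variable {n R : Type*} [Fintype n] [DecidableEq n] [Semiring R]

variable (n R) in
def mulVecEnd : Matrix n n R →+* End Rᵐᵒᵖ (n → R) where
  toFun M := mulVecBilin R Rᵐᵒᵖ M
  map_one' := LinearMap.ext one_mulVec
  map_mul' M N := LinearMap.ext fun x => (mulVec_mulVec x M N).symm
  map_zero' := map_zero _
  map_add' := map_add _

@[simp]
theorem mulVecEnd_apply (M : Matrix n n R) (x : n → R) : mulVecEnd n R M x = M *ᵥ x := rfl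

theorem mulVecEnd_injective : Function.Injective (mulVecEnd n R) := fun _ _ h =>
  ext_of_mulVec_single fun i => congr($h (Pi.single i 1))

end Matrix

section MulOpposite

variable (K n : Type*) [DivisionRing K] [Fintype n]

def piMulOppositeLinearEquiv : (n → K) ≃ₗ[Kᵐᵒᵖ] (n → Kᵐᵒᵖ) :=
  LinearEquiv.piCongrRight fun _ => MulOpposite.opLinearEquiv Kᵐᵒᵖ

instance : FiniteDimensional Kᵐᵒᵖ (n → K) :=
  Module.Finite.equiv (piMulOppositeLinearEquiv K n).symm

theorem finrank_mulOpposite_fun_eq_card : finrank Kᵐᵒᵖ (n → K) = Fintype.card n := by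
  rw [(piMulOppositeLinearEquiv K n).finrank_eq, finrank_fintype_fun_eq_card]

end MulOpposite

/-- If `A`, `B` are nonzero nilpotent `2 × 2` matrices over a division ring such that
`A + B` is nilpotent, then `A` and `B` have the same kernel. -/
theorem stmt_9 (K : Type*) [DivisionRing K]
    (A B : Matrix (Fin 2) (Fin 2) K) (hA0 : A ≠ 0) (hB0 : B ≠ 0)
    (hA : IsNilpotent A) (hB : IsNilpotent B) (hAB : IsNilpotent (A + B)) :
    ∀ x : Fin 2 → K, A.mulVec x = 0 ↔ B.mulVec x = 0 := by
  have hker := Module.End.ker_eq_ker_of_isNilpotent_add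
    (by simp [finrank_mulOpposite_fun_eq_card])
    ((map_ne_zero_iff _ Matrix.mulVecEnd_injective).mpr hA0)
    ((map_ne_zero_iff _ Matrix.mulVecEnd_injective).mpr hB0)
    (hA.map (Matrix.mulVecEnd (Fin 2) K)) (hB.map (Matrix.mulVecEnd (Fin 2) K))
    (by simpa using hAB.map (Matrix.mulVecEnd (Fin 2) K))
  intro x
  simpa using SetLike.ext_iff.mp hker x
end

section
/- Let K be a division ring, K0 a field contained in the center of K over which K has finite dimension q, and n a positive integer. If W is a K0-linear subspace of M_n(K) all of whose elements are nilpotent matrices, and W contains every strictly upper-triangular n×n matrix over K, then W is exactly the set NT_n(K) of strictly upper-triangular matrices. -/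
/-!
Split `M ∈ W` as `L + U` with `U` strictly upper triangular: then `L` is lower triangular and
`L + N ∈ W` is nilpotent for every strictly upper triangular `N`, and such an `L` must vanish.
Otherwise let `j` be the last column of `L` with a nonzero entry, and act on the row vectors
whose last nonzero coordinate is the `j`-th. If `L j j ≠ 0`, then `L` maps this set into itself.
If `L j j = 0`, pick `L i j ≠ 0` (so `j < i`): then `(L + E_{j i})²` maps it into itself, since
modulo earlier coordinates it sends `e_j` to `e_i` and then to `L i j • e_j`. A matrix mapping a
nonempty set of nonzero row vectors into itself is not nilpotent.
-/

namespace Matrix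

variable {ι R : Type*} [Fintype ι]

theorem exists_last_nonzero_col [LinearOrder ι] [Zero R] {L : Matrix ι ι R} (hL : L ≠ 0) :
    ∃ j, (∃ i, L i j ≠ 0) ∧ ∀ r s, j < s → L r s = 0 := by
  classical
  have hne : (Finset.univ.filter fun s => ∃ r, L r s ≠ 0).Nonempty := by
    contrapose! hL
    ext r s
    have hcol := Finset.filter_eq_empty_iff.mp hL (Finset.mem_univ s)
    push Not at hcol
    exact hcol r
  obtain ⟨j, hj, hmax⟩ := Finset.exists_max_image _ id hne
  refine ⟨j, (Finset.mem_filter.mp hj).2, fun r s hjs => ?_⟩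
  by_contra hrs
  exact (hmax s (by simpa using ⟨r, hrs⟩)).not_gt hjs

variable [Semiring R]

theorem not_isNilpotent_of_mapsTo_vecMul [DecidableEq ι] {A : Matrix ι ι R} {S : Set (ι → R)}
    (hA : Set.MapsTo (· ᵥ* A) S S) (hS : S.Nonempty) (h0 : 0 ∉ S) : ¬IsNilpotent A := by
  rintro ⟨k, hk⟩
  obtain ⟨v, hv⟩ := hS
  have hiter : ∀ m, (· ᵥ* A)^[m] v = v ᵥ* A ^ m := by
    intro m
    induction m with
    | zero => simp
    | succ m ih => rw [Function.iterate_succ_apply', ih, vecMul_vecMul, pow_succ]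
  have hvk := hA.iterate k hv
  rw [hiter, hk, vecMul_zero] at hvk
  exact h0 hvk

theorem vecMul_apply_eq_mul_of_forall_ne [DecidableEq ι] {v : ι → R} {A : Matrix ι ι R} {k s : ι}
    (h : ∀ r ≠ k, v r = 0 ∨ A r s = 0) : (v ᵥ* A) s = v k * A k s := by
  rw [vecMul_apply_eq_sum]
  refine Finset.sum_eq_single k (fun r _ hr => ?_) (by simp)
  rcases h r hr with h | h <;> simp [h]

variable [LinearOrder ι]

def lastNonzeroAt (j : ι) : Set (ι → R) :=
  {v | v j ≠ 0 ∧ ∀ s, j < s → v s = 0}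

theorem not_isNilpotent_of_mapsTo_lastNonzeroAt [Nontrivial R] {A : Matrix ι ι R} {j : ι}
    (hA : Set.MapsTo (· ᵥ* A) (lastNonzeroAt j) (lastNonzeroAt j)) : ¬IsNilpotent A :=
  not_isNilpotent_of_mapsTo_vecMul hA
    ⟨Pi.single j 1, by simp, fun s hs => Pi.single_eq_of_ne hs.ne' _⟩ fun h => h.1 rfl

variable [NoZeroDivisors R]

theorem mapsTo_vecMul_lastNonzeroAt_of_diag {L : Matrix ι ι R}
    (hlow : ∀ r s, r < s → L r s = 0) {j : ι} (hjj : L j j ≠ 0) :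
    Set.MapsTo (· ᵥ* L) (lastNonzeroAt j) (lastNonzeroAt j) := by
  rintro v ⟨hvj, hv⟩
  dsimp only
  have hrow : ∀ s, j ≤ s → (v ᵥ* L) s = v j * L j s := fun s hs =>
    vecMul_apply_eq_mul_of_forall_ne fun r hr => (lt_or_gt_of_ne hr).symm.imp (hv r)
      fun hrj => hlow r s (hrj.trans_le hs)
  refine ⟨?_, fun s hs => ?_⟩
  · rw [hrow j le_rfl]
    exact mul_ne_zero hvj hjj
  · rw [hrow s hs.le, hlow j s hs, mul_zero]

theorem mapsTo_vecMul_lastNonzeroAt_of_corner {L : Matrix ι ι R}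
    (hlow : ∀ r s, r < s → L r s = 0) {i j : ι} (hji : j < i)
    (hright : ∀ r s, j < s → L r s = 0) (hjj : L j j = 0) (hij : L i j ≠ 0) :
    Set.MapsTo (· ᵥ* (L + single j i 1) ^ 2) (lastNonzeroAt j) (lastNonzeroAt j) := by
  set P := L + single j i 1
  have hP_upper : ∀ r s, r < j → j ≤ s → P r s = 0 := fun r s hr hs => by
    simp [P, hlow r s (hr.trans_le hs), single_apply_of_row_ne hr.ne']
  have hP_row_i : ∀ s, P i s = L i s := fun s => by simp [P, single_apply_of_row_ne hji.ne]
  rintro v ⟨hvj, hv⟩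
  dsimp only
  have hw : ∀ s, j ≤ s → (v ᵥ* P) s = v j * P j s := fun s hs =>
    vecMul_apply_eq_mul_of_forall_ne fun r hr =>
      (lt_or_gt_of_ne hr).symm.imp (hv r) fun hrj => hP_upper r s hrj hs
  have hw_i : (v ᵥ* P) i = v j := by simp [hw i hji.le, P, hright j i hji]
  have hw_zero : ∀ s, j ≤ s → s ≠ i → (v ᵥ* P) s = 0 := fun s hs hsi => by
    rcases hs.eq_or_lt with rfl | hs
    · simp [hw j le_rfl, P, hjj, single_apply_of_col_ne j j hji.ne']
    · simp [hw s hs.le, P, hright j s hs, single_apply_of_col_ne j j hsi.symm]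
  have hw2 : ∀ s, j ≤ s → (v ᵥ* P ^ 2) s = v j * L i s := fun s hs => by
    rw [pow_two, ← vecMul_vecMul, vecMul_apply_eq_mul_of_forall_ne (k := i), hw_i, hP_row_i]
    intro r hr
    rcases lt_or_ge r j with hrj | hrj
    · exact .inr (hP_upper r s hrj hs)
    · exact .inl (hw_zero r hrj hr)
  refine ⟨?_, fun s hs => ?_⟩
  · rw [hw2 j le_rfl]
    exact mul_ne_zero hvj hij
  · rw [hw2 s hs.le, hright i s hs, mul_zero]

theorem eq_zero_of_forall_isNilpotent_add {L : Matrix ι ι R} (hlow : ∀ r s, r < s → L r s = 0)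
    (hnil : ∀ N : Matrix ι ι R, (∀ r s, s ≤ r → N r s = 0) → IsNilpotent (L + N)) : L = 0 := by
  by_contra hL
  obtain ⟨j, ⟨i, hij⟩, hright⟩ := exists_last_nonzero_col hL
  have : Nontrivial R := ⟨⟨_, _, hij⟩⟩
  by_cases hjj : L j j = 0
  · have hji : j < i := lt_of_le_of_ne (not_lt.mp fun h => hij (hlow i j h))
      fun h => hij (h ▸ hjj)
    refine not_isNilpotent_of_mapsTo_lastNonzeroAt
      (mapsTo_vecMul_lastNonzeroAt_of_corner hlow hji hright hjj hij) ?_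
    refine (hnil _ fun r s hsr => ?_).pow_of_pos two_ne_zero
    exact single_apply_of_ne _ _ _ _ _ fun ⟨hr, hs⟩ => (hs ▸ hr ▸ hsr).not_gt hji
  · exact not_isNilpotent_of_mapsTo_lastNonzeroAt (mapsTo_vecMul_lastNonzeroAt_of_diag hlow hjj)
      (by simpa using hnil 0 fun _ _ _ => rfl)

end Matrix

theorem stmt_11_general (K : Type*) [DivisionRing K] (K0 : Type*) [Field K0] [Algebra K0 K]
    (n : ℕ)
    (W : Submodule K0 (Matrix (Fin n) (Fin n) K))
    (hnil : ∀ M ∈ W, IsNilpotent M)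
    (hcontains : ∀ M : Matrix (Fin n) (Fin n) K, (∀ i j : Fin n, j ≤ i → M i j = 0) → M ∈ W) :
    ∀ M : Matrix (Fin n) (Fin n) K, M ∈ W ↔ ∀ i j : Fin n, j ≤ i → M i j = 0 := by
  intro M
  refine ⟨fun hM => ?_, hcontains M⟩
  set L : Matrix (Fin n) (Fin n) K := Matrix.of fun i j => if j ≤ i then M i j else 0
  have hU : M - L ∈ W := hcontains _ fun i j hji => by simp [L, hji]
  have hL : L = 0 := Matrix.eq_zero_of_forall_isNilpotent_add (fun i j hij => by simp [L, hij.not_ge])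
    fun N hN => hnil _ <| by simpa using W.add_mem (W.sub_mem hM hU) (hcontains N hN)
  intro i j hji
  simpa [L, hji] using congrFun₂ hL i j

/-- A nilpotent `K0`-linear subspace of `M_n(K)` containing all strictly
upper-triangular matrices is exactly the space of strictly upper-triangular
matrices. -/
theorem stmt_11 (K : Type*) [DivisionRing K] (K0 : Type*) [Field K0] [Algebra K0 K]
    [FiniteDimensional K0 K] (n : ℕ) (hn : 0 < n)
    (W : Submodule K0 (Matrix (Fin n) (Fin n) K))
    (hnil : ∀ M ∈ W, IsNilpotent M)
    (hcontains : ∀ M : Matrix (Fin n) (Fin n) K, (∀ i j : Fin n, j ≤ i → M i j = 0) → M ∈ W) :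
    ∀ M : Matrix (Fin n) (Fin n) K, M ∈ W ↔ ∀ i j : Fin n, j ≤ i → M i j = 0 :=
  stmt_11_general K K0 n W hnil hcontains
end

section
/- Let K be a division ring, K0 a field contained in the center of K over which K has finite dimension, and n a positive integer. Let T ∈ M_n(K) be a lower-triangular matrix (T i j = 0 whenever i < j). If for every strictly upper-triangular matrix U ∈ M_n(K) and every scalar t ∈ K0 the matrix U + t·T is nilpotent, then T = 0. -/
/-!
Induct on the interval `[j, i]` under inclusion, so that all entries of `T` in the square
`[j, i]²` except `c = T i j` may be assumed to vanish. For `j < i` put `M = E_{ji} + T`. Since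
`T` is lower triangular, `M` is block triangular for the partition `(i, ∞), [j, i], (-∞, j)`,
so its diagonal block on `[j, i]` is nilpotent along with `M`. That block is `E_{ji} + c E_{ij}`,
whose square has row `j` equal to `c e_j`; hence `c ^ k` is an entry of a vanishing power, and
`c = 0` because the ring is reduced. Diagonal entries are the case `U = 0` with one-point blocks.
-/

open OrderDual

namespace Matrix

variable {m R α : Type*}

section BlockTriangular

variable [Fintype m] [LinearOrder α] [Semiring R] {M N : Matrix m m R}
  {b : m → α}

theorem BlockTriangular.toSquareBlock_mul (hM : M.BlockTriangular b) (hN : N.BlockTriangular b)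
    (β : α) : (M * N).toSquareBlock b β = M.toSquareBlock b β * N.toSquareBlock b β := by
  ext i j
  have hout : ∑ c : {c // b c ≠ β}, M i c * N c j = 0 := by
    refine Finset.sum_eq_zero fun c _ => ?_
    rcases lt_or_gt_of_ne c.2 with hlt | hgt
    · rw [hM (by rwa [i.2]), zero_mul]
    · rw [hN (by rwa [j.2]), mul_zero]
  simp only [toSquareBlock_def, of_apply, mul_apply]
  rw [← Fintype.sum_subtype_add_sum_subtype (fun c => b c = β), hout, add_zero]

theorem BlockTriangular.toSquareBlock_pow [DecidableEq m] (hM : M.BlockTriangular b) (β : α)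
    (k : ℕ) : (M ^ k).toSquareBlock b β = M.toSquareBlock b β ^ k := by
  induction k with
  | zero =>
    ext i j
    simp [toSquareBlock_def, one_apply, Subtype.ext_iff]
  | succ k ih => rw [pow_succ, (hM.pow k).toSquareBlock_mul hM, ih, pow_succ]

theorem BlockTriangular.isNilpotent_toSquareBlock [DecidableEq m] (hM : M.BlockTriangular b)
    (hnil : IsNilpotent M) (β : α) : IsNilpotent (M.toSquareBlock b β) := by
  obtain ⟨k, hk⟩ := hnil
  exact ⟨k, by rw [← hM.toSquareBlock_pow, hk]; rfl⟩

end BlockTriangular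

section Rows

variable [Fintype m] [DecidableEq m] [Semiring R] {N : Matrix m m R} {p q : m}

theorem pow_apply_self_of_row (hrow : ∀ r, r ≠ p → N p r = 0) (k : ℕ) :
    (N ^ k) p p = N p p ^ k := by
  induction k with
  | zero => simp
  | succ k ih =>
    rw [pow_succ', mul_apply, Finset.sum_eq_single p (fun r _ hr => by rw [hrow r hr, zero_mul])
      (fun hp => absurd (Finset.mem_univ p) hp), ih, pow_succ']

theorem isNilpotent_apply_self_of_row (hN : IsNilpotent N) (hrow : ∀ r, r ≠ p → N p r = 0) :
    IsNilpotent (N p p) := by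
  obtain ⟨k, hk⟩ := hN
  exact ⟨k, by rw [← pow_apply_self_of_row hrow, hk, zero_apply]⟩

theorem isNilpotent_of_rows_eq_single (hN : IsNilpotent N) {c : R}
    (hp : ∀ r, N p r = if r = q then 1 else 0) (hq : ∀ r, N q r = if r = p then c else 0) :
    IsNilpotent c := by
  have hsq : ∀ r, (N * N) p r = if r = p then c else 0 := fun r => by
    rw [mul_apply, Finset.sum_eq_single q (fun s _ hs => by rw [hp, if_neg hs, zero_mul])
      (fun hq => absurd (Finset.mem_univ q) hq), hp, if_pos rfl, one_mul, hq]
  have hN2 : IsNilpotent (N * N) := by simpa [sq] using hN.pow_succ 1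
  have hc := isNilpotent_apply_self_of_row hN2 fun r hr => by rw [hsq, if_neg hr]
  rwa [hsq, if_pos rfl] at hc

end Rows

end Matrix

section IccBlock

variable {m : Type*} [LinearOrder m]

def iccBlock (j i : m) (a : m) : ℕ :=
  if a < j then 2 else if a ≤ i then 1 else 0

theorem antitone_iccBlock (j i : m) : Antitone (iccBlock j i) := by
  intro a c hac
  unfold iccBlock
  split_ifs <;> first | omega | order

theorem iccBlock_eq_one {j i a : m} : iccBlock j i a = 1 ↔ j ≤ a ∧ a ≤ i := by
  unfold iccBlock
  split_ifs <;> simp_all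

end IccBlock

namespace Matrix

variable {m R : Type*} [LinearOrder m]

theorem IsLowerTriangular.blockTriangular_of_antitone [Zero R] {T : Matrix m m R} {α : Type*}
    [Preorder α] {b : m → α} (hT : T.IsLowerTriangular) (hb : Antitone b) :
    T.BlockTriangular b :=
  fun _ _ hij => hT (hb.reflect_lt hij)

variable [Fintype m] [Semiring R] {T : Matrix m m R}

theorem IsLowerTriangular.isNilpotent_apply_self (hT : T.IsLowerTriangular)
    (hnil : IsNilpotent T) (i : m) : IsNilpotent (T i i) :=
  isNilpotent_apply_self_of_row (p := (⟨i, rfl⟩ : {a // toDual a = toDual i}))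
    (hT.isNilpotent_toSquareBlock hnil (toDual i))
    fun r hr => absurd (Subtype.ext (toDual.injective r.2)) hr

theorem IsLowerTriangular.isNilpotent_apply_of_isNilpotent_single_add (hT : T.IsLowerTriangular)
    {i j : m} (hji : j < i) (hnil : IsNilpotent (single j i 1 + T))
    (hT_zero : ∀ a b, j ≤ b → a ≤ i → (a, b) ≠ (i, j) → T a b = 0) : IsNilpotent (T i j) := by
  have hM : (single j i 1 + T).BlockTriangular (iccBlock j i) :=
    (blockTriangular_single (by rw [iccBlock_eq_one.2 ⟨le_rfl, hji.le⟩,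
      iccBlock_eq_one.2 ⟨hji.le, le_rfl⟩]) 1).add
      (hT.blockTriangular_of_antitone (antitone_iccBlock j i))
  refine isNilpotent_of_rows_eq_single (hM.isNilpotent_toSquareBlock hnil 1)
    (p := ⟨j, iccBlock_eq_one.2 ⟨le_rfl, hji.le⟩⟩) (q := ⟨i, iccBlock_eq_one.2 ⟨hji.le, le_rfl⟩⟩)
    (fun r => ?_) (fun r => ?_)
  all_goals obtain ⟨hjr, hri⟩ := iccBlock_eq_one.1 r.2
  · have : T j r = 0 := hT_zero j r hjr hji.le (by simp [hji.ne])
    simp [toSquareBlock_def, single_apply, this, Subtype.ext_iff, @eq_comm _ i]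
  · by_cases hr : (r : m) = j
    · simp [toSquareBlock_def, single_apply, hr, Subtype.ext_iff, hji.ne']
    · have : T i r = 0 := hT_zero i r hjr le_rfl (by simp [hr])
      simp [toSquareBlock_def, single_apply, hr, this, Subtype.ext_iff, hji.ne]

theorem IsLowerTriangular.eq_zero_of_forall_isNilpotent_add [IsReduced R]
    (hT : T.IsLowerTriangular)
    (h : ∀ U : Matrix m m R, (∀ i j, j ≤ i → U i j = 0) → IsNilpotent (U + T)) : T = 0 := by
  -- Well-founded induction on the interval `[j, i]` under inclusion, encoded as `(toDual j, i)`.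
  suffices key : ∀ p : mᵒᵈ × m, T p.2 (ofDual p.1) = 0 from ext fun i j => key (toDual j, i)
  intro p
  induction p using WellFoundedLT.induction with
  | _ p ih =>
    obtain ⟨j, i⟩ := p
    rcases lt_trichotomy i (ofDual j) with hlt | rfl | hgt
    · exact hT hlt
    · exact (hT.isNilpotent_apply_self (by simpa using h 0 fun _ _ _ => rfl) i).eq_zero
    · have hU : ∀ a b, b ≤ a → single (ofDual j) i (1 : R) a b = 0 := fun a b hba =>
        single_apply_of_ne _ _ _ _ _ (by rintro ⟨rfl, rfl⟩; exact hgt.not_ge hba)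
      refine (hT.isNilpotent_apply_of_isNilpotent_single_add hgt (h _ hU)
        fun a b hjb hai hne => ih (toDual b, a) ?_).eq_zero
      refine lt_of_le_of_ne (Prod.mk_le_mk.2 ⟨hjb, hai⟩) fun heq => hne ?_
      exact Prod.ext (congrArg Prod.snd heq) (congrArg (ofDual ∘ Prod.fst) heq)

end Matrix

theorem stmt_12_general (K : Type*) [DivisionRing K] (K0 : Type*) [Field K0] [Algebra K0 K]
    (n : ℕ)
    (T : Matrix (Fin n) (Fin n) K)
    (hT : ∀ i j : Fin n, i < j → T i j = 0)
    (h : ∀ U : Matrix (Fin n) (Fin n) K, (∀ i j : Fin n, j ≤ i → U i j = 0) →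
      ∀ t : K0, IsNilpotent (U + t • T)) :
    T = 0 :=
  Matrix.IsLowerTriangular.eq_zero_of_forall_isNilpotent_add (fun i j hij => hT i j hij)
    fun U hU => by simpa using h U hU 1

/-- If `T` is lower-triangular and `U + t • T` is nilpotent for every strictly
upper-triangular `U` and every `t ∈ K0`, then `T = 0`. -/
theorem stmt_12 (K : Type*) [DivisionRing K] (K0 : Type*) [Field K0] [Algebra K0 K]
    [FiniteDimensional K0 K] (n : ℕ) (hn : 0 < n)
    (T : Matrix (Fin n) (Fin n) K)
    (hT : ∀ i j : Fin n, i < j → T i j = 0)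
    (h : ∀ U : Matrix (Fin n) (Fin n) K, (∀ i j : Fin n, j ≤ i → U i j = 0) →
      ∀ t : K0, IsNilpotent (U + t • T)) :
    T = 0 :=
  stmt_12_general K K0 n T hT h
end

section
/- Let K be a division ring, K0 a field contained in the center of K over which K has finite dimension q, and n a positive integer. Let V be a K0-linear subspace of M_n(K) all of whose elements are nilpotent matrices, and let X ∈ K^n be a nonzero vector. Then the K0-linear subspace V·X = {M·X : M ∈ V} of K^n has dimension at most (n−1)·q over K0. -/
/-!
If `M X = X c` with `M` nilpotent, then `M ^ k X = X c ^ k` forces `c = 0`; right multiplication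
of a vector by `c` is written `op c •`. Hence `V X` meets the right `K`-line `X K`, a `K0`-subspace
of dimension `q` in the `n q`-dimensional space `K ^ n`, only in `0`.
-/

open Matrix MulOpposite

section

variable {K : Type*} [DivisionRing K] {ι : Type*}

theorem Matrix.pow_mulVec_of_mulVec_eq_op_smul [Fintype ι] [DecidableEq ι] {M : Matrix ι ι K}
    {v : ι → K} {c : K} (h : M *ᵥ v = op c • v) (k : ℕ) : (M ^ k) *ᵥ v = op (c ^ k) • v := by
  induction k with
  | zero => simp
  | succ k ih =>
    rw [pow_succ', ← mulVec_mulVec, ih, mulVec_smul, h, smul_smul, ← op_mul, ← pow_succ']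

theorem Matrix.eq_zero_of_isNilpotent_of_mulVec_eq_op_smul [Fintype ι] [DecidableEq ι]
    {M : Matrix ι ι K} (hM : IsNilpotent M) {v : ι → K} (hv : v ≠ 0) {c : K}
    (h : M *ᵥ v = op c • v) : c = 0 := by
  obtain ⟨k, hk⟩ := hM
  have hck : op (c ^ k) • v = 0 := by
    rw [← pow_mulVec_of_mulVec_eq_op_smul h, hk, zero_mulVec]
  rw [smul_eq_zero, op_eq_zero_iff] at hck
  exact eq_zero_of_pow_eq_zero (hck.resolve_right hv)

variable (K0 : Type*) [Field K0] [Algebra K0 K]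

def rightLine (v : ι → K) : K →ₗ[K0] ι → K where
  toFun c := op c • v
  map_add' a b := by rw [op_add, add_smul]
  map_smul' a c := by
    ext i
    simp [Algebra.smul_def, Algebra.commutes, mul_assoc]

variable {K0}

@[simp]
theorem rightLine_apply (v : ι → K) (c : K) : rightLine K0 v c = op c • v := rfl

theorem rightLine_injective {v : ι → K} (hv : v ≠ 0) : Function.Injective (rightLine K0 v) :=
  (smul_left_injective Kᵐᵒᵖ hv).comp op_injective

theorem finrank_add_finrank_le_of_disjoint_range_rightLine [Fintype ι] [FiniteDimensional K0 K]
    {v : ι → K} (hv : v ≠ 0) {W : Submodule K0 (ι → K)}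
    (hW : Disjoint W (LinearMap.range (rightLine K0 v))) :
    Module.finrank K0 W + Module.finrank K0 K ≤ Fintype.card ι * Module.finrank K0 K := by
  have h := Submodule.finrank_add_finrank_le_of_disjoint hW
  rwa [LinearMap.finrank_range_of_inj (rightLine_injective hv), Module.finrank_pi_fintype,
    Finset.sum_const, Finset.card_univ, smul_eq_mul] at h

theorem disjoint_range_rightLine_of_isNilpotent [Fintype ι] [DecidableEq ι] {v : ι → K}
    {W : Submodule K0 (ι → K)} (hW : ∀ y ∈ W, ∃ M : Matrix ι ι K, IsNilpotent M ∧ M *ᵥ v = y) :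
    Disjoint W (LinearMap.range (rightLine K0 v)) := by
  rw [Submodule.disjoint_def]
  rintro _ hy ⟨c, rfl⟩
  obtain ⟨M, hM, hMv⟩ := hW _ hy
  rcases eq_or_ne v 0 with rfl | hv
  · simp
  · simp [eq_zero_of_isNilpotent_of_mulVec_eq_op_smul hM hv hMv]

end

theorem stmt_14_general (K : Type*) [DivisionRing K] (K0 : Type*) [Field K0] [Algebra K0 K]
    [FiniteDimensional K0 K] (q n : ℕ) (hq : Module.finrank K0 K = q)
    (V : Submodule K0 (Matrix (Fin n) (Fin n) K))
    (hV : ∀ M ∈ V, IsNilpotent M)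
    (X : Fin n → K) (hX : X ≠ 0)
    (W : Submodule K0 (Fin n → K))
    (hW : ∀ y : Fin n → K, y ∈ W ↔ ∃ M ∈ V, M.mulVec X = y) :
    Module.finrank K0 W ≤ (n - 1) * q := by
  have hdisj : Disjoint W (LinearMap.range (rightLine K0 X)) :=
    disjoint_range_rightLine_of_isNilpotent fun y hy => by
      obtain ⟨M, hM, hMX⟩ := (hW y).1 hy
      exact ⟨M, hV M hM, hMX⟩
  have hle := finrank_add_finrank_le_of_disjoint_range_rightLine hX hdisj
  rw [Fintype.card_fin, hq] at hle
  rw [Nat.sub_one_mul]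
  omega

/-- If `V` is a nilpotent `K0`-linear subspace of `M_n(K)` and `X ∈ K^n` is nonzero,
then the image subspace `V · X = {M · X : M ∈ V}` of `K^n` has `K0`-dimension at most
`(n - 1) * q`. -/
theorem stmt_14 (K : Type*) [DivisionRing K] (K0 : Type*) [Field K0] [Algebra K0 K]
    [FiniteDimensional K0 K] (q n : ℕ) (hq : Module.finrank K0 K = q) (hn : 0 < n)
    (V : Submodule K0 (Matrix (Fin n) (Fin n) K))
    (hV : ∀ M ∈ V, IsNilpotent M)
    (X : Fin n → K) (hX : X ≠ 0)
    (W : Submodule K0 (Fin n → K))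
    (hW : ∀ y : Fin n → K, y ∈ W ↔ ∃ M ∈ V, M.mulVec X = y) :
    Module.finrank K0 W ≤ (n - 1) * q :=
  stmt_14_general K K0 q n hq V hV X hX W hW
end
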